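/- arXiv:1806.07294 — 3 statements merged into one kernel-verified Lean document; each statement's English description precedes it below -/
import Mathlib

section
/- Let 𝒫* denote the set of minimizers of the primal objective P(x) = f(x)+g(x)+h(x) and 𝒟* the set of minimizers of the dual objective D(u) = (f+g)*(−u) + h*(u). Then the set of fixed points of the generalized three operator splitting operator is the weighted Minkowski sum Fix(G_γ) = 𝒫* + γ D 𝒟* = { x + γ D u : x ∈ 𝒫*, u ∈ 𝒟* }. -/
open Finset
open scoped RealInnerProductSpace

noncomputable section

variable {p : ℕ}

/-- proper, lower semicontinuous, convex extended-real function. -/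
structure ProperLscConvex (g : EuclideanSpace ℝ (Fin p) → EReal) : Prop where
  proper : ∃ x, g x ≠ ⊤
  ne_bot : ∀ x, g x ≠ ⊥
  lsc : LowerSemicontinuous g
  convex : ∀ x y : EuclideanSpace ℝ (Fin p), ∀ a b : ℝ, 0 ≤ a → 0 ≤ b → a + b = 1 →
    g (a • x + b • y) ≤ (a : EReal) * g x + (b : EReal) * g y

/-- the squared `D⁻¹`-norm for the diagonal matrix `D = diag d`. -/
def sqDinv (d : Fin p → ℝ) (v : EuclideanSpace ℝ (Fin p)) : ℝ :=
  ∑ j, (d j)⁻¹ * (v j) ^ 2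

/-- `z = prox^{D⁻¹}_{γ g}(x)`. -/
def IsProxDinv (d : Fin p → ℝ) (γ : ℝ) (g : EuclideanSpace ℝ (Fin p) → EReal)
    (x z : EuclideanSpace ℝ (Fin p)) : Prop :=
  ∀ w, g z + ((1 / (2 * γ) * sqDinv d (x - z) : ℝ) : EReal)
      ≤ g w + ((1 / (2 * γ) * sqDinv d (x - w) : ℝ) : EReal)

/-- Fenchel conjugate. -/
def fconj (g : EuclideanSpace ℝ (Fin p) → EReal) (u : EuclideanSpace ℝ (Fin p)) : EReal :=
  ⨆ x, ((⟪x, u⟫ : ℝ) : EReal) - g x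

/-!
A point `y` is fixed by `G_γ` exactly when, for `z = prox_h y` and `u = (γD)⁻¹(y - z)`, the two
prox optimality conditions read `u ∈ ∂h(z)` and `-u - ∇f(z) ∈ ∂g(z)`; conversely these two
conditions determine both prox values, so `Fix G_γ = {x + γDu | u ∈ ∂h(x), -u - ∇f(x) ∈ ∂g(x)}`.
As `f` is differentiable, `∂(f + g) = ∇f + ∂g`, and the pairs with `-u ∈ ∂(f + g)(x)` and
`u ∈ ∂h(x)` are exactly the primal–dual optimal pairs. They close the duality gap by the
Fenchel–Young equality. Conversely, under the relative interior qualification, separating the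
epigraph of the value function `y ↦ inf {(f + g)(x) + h(w) | w - x = y}` from the negative
vertical half-line produces a dual point with zero gap, and zero gap at a dual minimiser forces
the Fenchel–Young equalities.
-/

open Filter Topology Set

namespace ThreeOperatorSplitting

local notation "E" => EuclideanSpace ℝ (Fin p)

lemma eq_top_or_exists_eq_coe {a : EReal} (ha : a ≠ ⊥) : a = ⊤ ∨ ∃ r : ℝ, a = r := by
  induction a using EReal.rec <;> simp_all

lemma exists_eq_coe {a : EReal} (ha : a ≠ ⊤) (ha' : a ≠ ⊥) : ∃ r : ℝ, a = r :=
  ⟨a.toReal, (EReal.coe_toReal ha ha').symm⟩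

lemma coe_add_le_coe_iff {r s : ℝ} {e : EReal} :
    (r : EReal) + e ≤ s ↔ e ≤ ((s - r : ℝ) : EReal) := by
  induction e using EReal.rec with
  | bot => simp
  | coe e => norm_cast; constructor <;> intro <;> linarith
  | top => simp only [EReal.coe_add_top, top_le_iff, EReal.coe_ne_top]

lemma coe_le_coe_add_iff {r s : ℝ} {e : EReal} :
    (s : EReal) ≤ r + e ↔ ((s - r : ℝ) : EReal) ≤ e := by
  induction e using EReal.rec with
  | bot => simp only [EReal.add_bot, le_bot_iff, EReal.coe_ne_bot]
  | coe e => norm_cast; constructor <;> intro <;> linarith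
  | top => simp

lemma le_coe_of_add_le_coe {a b : EReal} {a₀ b₀ : ℝ} (hb : (b₀ : EReal) ≤ b)
    (h : a + b ≤ ((a₀ + b₀ : ℝ) : EReal)) : a ≤ a₀ := by
  induction b using EReal.rec with
  | bot => simp at hb
  | coe b =>
    rw [add_comm, coe_add_le_coe_iff] at h
    exact h.trans (by norm_cast at hb ⊢; linarith)
  | top =>
    rcases eq_or_ne a ⊥ with rfl | ha
    · exact bot_le
    rw [EReal.add_top_of_ne_bot ha, top_le_iff] at h
    exact absurd h (EReal.coe_ne_top _)

lemma le_of_hasDerivAt_of_forall_mul_le {g : ℝ → ℝ} {g' c : ℝ} (hg : HasDerivAt g g' 0)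
    (h : ∀ t ∈ Ioo (0 : ℝ) 1, c * t ≤ g t - g 0) : c ≤ g' := by
  refine ge_of_tendsto hg.tendsto_slope_zero_right ?_
  filter_upwards [Ioo_mem_nhdsGT one_pos] with t ht
  rw [zero_add, smul_eq_mul, le_inv_mul_iff₀ ht.1, mul_comm]
  exact h t ht

def epigraph {V : Type*} (φ : V → EReal) : Set (V × ℝ) := {q | φ q.1 ≤ q.2}

section Epigraph

variable {V : Type*} [AddCommGroup V] [Module ℝ V]

lemma le_combo_of_convex_epigraph {φ : V → EReal} (hφ : Convex ℝ (epigraph φ)) {x y : V}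
    {A B a b : ℝ} (hx : φ x ≤ A) (hy : φ y ≤ B) (ha : 0 ≤ a) (hb : 0 ≤ b) (hab : a + b = 1) :
    φ (a • x + b • y) ≤ ((a * A + b * B : ℝ) : EReal) :=
  hφ (x := (x, A)) (y := (y, B)) hx hy ha hb hab

lemma convex_epigraph_coe_add {f : V → ℝ} (hf : ConvexOn ℝ univ f) {g : V → EReal}
    (hg : Convex ℝ (epigraph g)) : Convex ℝ (epigraph fun x => (f x : EReal) + g x) := by
  rintro ⟨x, A⟩ hx ⟨y, B⟩ hy a b ha hb hab
  simp only [epigraph, mem_ofPred_eq, Prod.smul_mk, Prod.mk_add_mk, smul_eq_mul] at hx hy ⊢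
  rw [coe_add_le_coe_iff] at hx hy ⊢
  refine (le_combo_of_convex_epigraph hg hx hy ha hb hab).trans ?_
  have := hf.2 (mem_univ x) (mem_univ y) ha hb hab
  simp only [smul_eq_mul] at this
  exact_mod_cast (by linarith)

end Epigraph

lemma _root_.ProperLscConvex.convex_epigraph {g : E → EReal} (hg : ProperLscConvex g) :
    Convex ℝ (epigraph g) := by
  rintro ⟨x, A⟩ (hx : g x ≤ A) ⟨y, B⟩ (hy : g y ≤ B) a b ha hb hab
  calc g (a • x + b • y) ≤ a * g x + b * g y := hg.convex x y a b ha hb hab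
    _ ≤ a * A + b * B := add_le_add (mul_le_mul_of_nonneg_left hx (by exact_mod_cast ha))
        (mul_le_mul_of_nonneg_left hy (by exact_mod_cast hb))
    _ = ((a * A + b * B : ℝ) : EReal) := by norm_cast

section Subgradient

variable {V : Type*} [NormedAddCommGroup V] [InnerProductSpace ℝ V]

def HasSubgradientAt (φ : V → EReal) (u x : V) : Prop :=
  ∀ w, φ x + ((⟪w - x, u⟫ : ℝ) : EReal) ≤ φ w

lemma HasSubgradientAt.ne_top {φ : V → EReal} {u x : V} (hs : HasSubgradientAt φ u x)
    (hφ : ∃ w, φ w ≠ ⊤) : φ x ≠ ⊤ := by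
  obtain ⟨w, hw⟩ := hφ
  rintro hx
  simpa [hx, hw] using hs w

lemma HasSubgradientAt.sub_of_hasDerivAt {ψ : V → ℝ} {φ : V → EReal} (hφb : ∀ y, φ y ≠ ⊥)
    (hφ : Convex ℝ (epigraph φ)) {x a s : V}
    (hψ : ∀ w, HasDerivAt (fun t : ℝ => ψ (AffineMap.lineMap x w t)) ⟪a, w - x⟫ 0)
    (hs : HasSubgradientAt (fun y => (ψ y : EReal) + φ y) s x) (hx : φ x ≠ ⊤) :
    HasSubgradientAt φ (s - a) x := by
  obtain ⟨A, hA⟩ := exists_eq_coe hx (hφb x)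
  intro w
  rcases eq_top_or_exists_eq_coe (hφb w) with hw | ⟨B, hB⟩
  · simp [hw]
  have key : A + ⟪w - x, s⟫ - B ≤ ⟪a, w - x⟫ := by
    refine le_of_hasDerivAt_of_forall_mul_le (hψ w) fun t ht => ?_
    have hcombo : φ (AffineMap.lineMap x w t) ≤ (((1 - t) * A + t * B : ℝ) : EReal) := by
      rw [AffineMap.lineMap_apply_module]
      exact le_combo_of_convex_epigraph hφ hA.le hB.le (by linarith [ht.2]) ht.1.le (by ring)
    have hsub := (hs (AffineMap.lineMap x w t)).trans (add_le_add le_rfl hcombo)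
    have hstep : AffineMap.lineMap x w t - x = t • (w - x) := by
      rw [AffineMap.lineMap_apply_module]; module
    dsimp only at hsub
    rw [hstep, real_inner_smul_left, hA] at hsub
    norm_cast at hsub
    simp only [AffineMap.lineMap_apply_zero]
    linarith
  rw [hA, hB]
  norm_cast
  rw [inner_sub_right, real_inner_comm a]
  linarith

variable [CompleteSpace V] {f : V → ℝ} {a x : V}

lemma hasDerivAt_lineMap_of_hasGradientAt (hf : HasGradientAt f a x) (w : V) :
    HasDerivAt (fun t : ℝ => f (AffineMap.lineMap x w t)) ⟪a, w - x⟫ 0 := by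
  have hf' : HasFDerivAt f (InnerProductSpace.toDual ℝ V a) (AffineMap.lineMap x w (0 : ℝ)) := by
    simpa using hf.hasFDerivAt
  have := hf'.comp_hasDerivAt (0 : ℝ) AffineMap.hasDerivAt_lineMap
  rwa [InnerProductSpace.toDual_apply_apply] at this

lemma ConvexOn.add_inner_le_of_hasGradientAt (hf : ConvexOn ℝ univ f) (hfa : HasGradientAt f a x)
    (w : V) : f x + ⟪a, w - x⟫ ≤ f w := by
  have := (hf.comp_affineMap (AffineMap.lineMap x w)).le_slope_of_hasDerivAt (mem_univ 0)
    (mem_univ 1) one_pos (hasDerivAt_lineMap_of_hasGradientAt hfa w)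
  simp [slope] at this
  linarith

lemma HasSubgradientAt.coe_add_of_hasGradientAt (hf : ConvexOn ℝ univ f) {φ : V → EReal} {s : V}
    (hfa : HasGradientAt f a x) (hs : HasSubgradientAt φ s x) :
    HasSubgradientAt (fun y => (f y : EReal) + φ y) (s + a) x := by
  intro w
  calc (f x : EReal) + φ x + ((⟪w - x, s + a⟫ : ℝ) : EReal)
      = ((f x + ⟪a, w - x⟫ : ℝ) : EReal) + (φ x + ((⟪w - x, s⟫ : ℝ) : EReal)) := by
        rw [inner_add_right, real_inner_comm a]; push_cast; abel
    _ ≤ f w + φ w :=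
        add_le_add (by exact_mod_cast ConvexOn.add_inner_le_of_hasGradientAt hf hfa w) (hs w)

lemma hasSubgradientAt_coe_add_iff (hf : ConvexOn ℝ univ f) {φ : V → EReal}
    (hφb : ∀ y, φ y ≠ ⊥) (hφ : Convex ℝ (epigraph φ)) (hφp : ∃ w, φ w ≠ ⊤) {s : V}
    (hfa : HasGradientAt f a x) :
    HasSubgradientAt (fun y => (f y : EReal) + φ y) s x ↔ HasSubgradientAt φ (s - a) x := by
  refine ⟨fun hs => hs.sub_of_hasDerivAt hφb hφ (hasDerivAt_lineMap_of_hasGradientAt hfa) ?_,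
    fun hs => by simpa using hs.coe_add_of_hasGradientAt hf hfa⟩
  obtain ⟨w, hw⟩ := hφp
  intro hx
  exact hs.ne_top ⟨w, EReal.add_ne_top (EReal.coe_ne_top _) hw⟩ (by simp [hx])

end Subgradient

lemma exists_clm_le_of_mem_interior {W : Type*} [NormedAddCommGroup W] [NormedSpace ℝ W]
    {S : Set (W × ℝ)} (hS : Convex ℝ S) {r₀ : ℝ} (hr₀ : ((0 : W), r₀) ∈ interior S)
    (hneg : ∀ r < 0, ((0 : W), r) ∉ S) : ∃ ℓ : W →L[ℝ] ℝ, ∀ q ∈ S, ℓ q.1 ≤ q.2 := by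
  have h00 : ((0 : W), (0 : ℝ)) ∉ interior S := by
    intro h
    have hnhds : {r : ℝ | ((0 : W), r) ∈ S} ∈ 𝓝 0 :=
      (continuous_const.prodMk continuous_id).continuousAt.preimage_mem_nhds
        (mem_interior_iff_mem_nhds.mp h)
    obtain ⟨l, u, ⟨hl, hu⟩, hsub⟩ := mem_nhds_iff_exists_Ioo_subset.mp hnhds
    exact hneg (l / 2) (by linarith) (hsub ⟨by linarith, by linarith⟩)
  obtain ⟨φ, hφ⟩ := geometric_hahn_banach_open_point hS.interior isOpen_interior h00
  rw [Prod.mk_zero_zero, map_zero] at hφ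
  have hle : ∀ q ∈ S, φ q ≤ 0 := by
    have hcl : closure S ⊆ {q | φ q ≤ 0} := by
      rw [← hS.closure_interior_eq_closure_of_nonempty_interior ⟨_, hr₀⟩]
      exact closure_minimal (fun q hq => (hφ q hq).le) (isClosed_le φ.continuous continuous_const)
    exact fun q hq => hcl (subset_closure hq)
  have hsplit : ∀ q : W × ℝ, φ q = φ (q.1, 0) + q.2 * φ (0, 1) := by
    intro q
    rw [← smul_eq_mul, ← map_smul, ← map_add, Prod.smul_mk, smul_zero, smul_eq_mul, mul_one,
      Prod.mk_add_mk, add_zero, zero_add]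
  -- the separating hyperplane is not vertical, since it leaves the interior point `(0, r₀)` below
  have hα : φ (0, 1) < 0 := by
    have h1 := hφ _ hr₀
    simp only [hsplit (0, r₀), Prod.mk_zero_zero, map_zero, zero_add] at h1
    exact neg_of_mul_neg_right (by linarith)
      (not_lt.mp fun h => hneg r₀ h (interior_subset hr₀))
  refine ⟨(-φ (0, 1))⁻¹ • φ.comp (ContinuousLinearMap.inl ℝ W ℝ), fun q hq => ?_⟩
  have h1 := hle q hq
  rw [hsplit] at h1
  simp only [FunLike.coe_smul, ContinuousLinearMap.coe_comp, Pi.smul_apply,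
    Function.comp_apply, ContinuousLinearMap.inl_apply, smul_eq_mul]
  rw [inv_mul_le_iff₀ (neg_pos.mpr hα)]
  linarith

section ValueEpigraph

variable {V : Type*} [NormedAddCommGroup V] [NormedSpace ℝ V]

lemma eventually_mem_of_mem_intrinsicInterior {s : Set V} {x₀ : V}
    (hx₀ : x₀ ∈ intrinsicInterior ℝ s) :
    ∀ᶠ v : (affineSpan ℝ s).direction in 𝓝 0, x₀ + v ∈ s := by
  obtain ⟨y, hy, rfl⟩ := hx₀
  let e : (affineSpan ℝ s).direction → affineSpan ℝ s :=
    fun v => ⟨v +ᵥ (y : V), AffineSubspace.vadd_mem_of_mem_direction v.2 y.2⟩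
  have he : Continuous e := (continuous_subtype_val.add continuous_const).subtype_mk _
  have he0 : e 0 = y := Subtype.ext (zero_vadd _ _)
  filter_upwards [he.continuousAt.preimage_mem_nhds (he0 ▸ mem_interior_iff_mem_nhds.mp hy)]
    with v (hv : (v : V) + y ∈ s)
  rwa [add_comm]

/-- Transported to the direction of the affine hull, `φ` becomes a real convex function whose
domain has `0` in its interior, hence is continuous there. -/
lemma exists_eventually_le_of_mem_intrinsicInterior [FiniteDimensional ℝ V] {φ : V → EReal}
    (hφb : ∀ x, φ x ≠ ⊥) (hφ : Convex ℝ (epigraph φ)) {x₀ : V}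
    (hx₀ : x₀ ∈ intrinsicInterior ℝ {x | φ x ≠ ⊤}) :
    ∃ M : ℝ, ∀ᶠ v : (affineSpan ℝ {x | φ x ≠ ⊤}).direction in 𝓝 0, φ (x₀ + v) ≤ M := by
  set N := (affineSpan ℝ {x | φ x ≠ ⊤}).direction
  set C : Set N := {v | φ (x₀ + v) ≠ ⊤}
  set ψ : N → ℝ := fun v => (φ (x₀ + v)).toReal
  have hψ : ∀ v ∈ C, φ (x₀ + v) = ψ v := fun v hv => (EReal.coe_toReal hv (hφb _)).symm
  have hcombo : ∀ v ∈ C, ∀ w ∈ C, ∀ a b : ℝ, 0 ≤ a → 0 ≤ b → a + b = 1 →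
      φ (x₀ + ↑(a • v + b • w)) ≤ ((a * ψ v + b * ψ w : ℝ) : EReal) := by
    intro v hv w hw a b ha hb hab
    have hx : x₀ + ↑(a • v + b • w) = a • (x₀ + ↑v) + b • (x₀ + ↑w) := by
      push_cast
      linear_combination (norm := module) (-hab) • x₀
    rw [hx]
    exact le_combo_of_convex_epigraph hφ (hψ v hv).le (hψ w hw).le ha hb hab
  have hconv : ConvexOn ℝ C ψ := by
    refine ⟨fun v hv w hw a b ha hb hab => ?_, fun v hv w hw a b ha hb hab => ?_⟩
    · exact ne_top_of_le_ne_top (EReal.coe_ne_top _) (hcombo v hv w hw a b ha hb hab)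
    · have h := hcombo v hv w hw a b ha hb hab
      rw [hψ _ (ne_top_of_le_ne_top (EReal.coe_ne_top _) h)] at h
      exact_mod_cast h
  have hC : C ∈ 𝓝 0 := eventually_mem_of_mem_intrinsicInterior hx₀
  have hcont : ContinuousAt ψ 0 := hconv.continuousOn_interior.continuousAt
    (isOpen_interior.mem_nhds (mem_interior_iff_mem_nhds.mpr hC))
  refine ⟨ψ 0 + 1, ?_⟩
  filter_upwards [hC, hcont.eventually (gt_mem_nhds (lt_add_one _))] with v hvC hv
  rw [hψ v hvC]
  exact_mod_cast hv.le

/-- The epigraph of the value function `y ↦ inf {F x + h w - m | w - x = y}`, restricted to `W`. -/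
def valueEpigraph (F h : V → EReal) (m : ℝ) (W : Submodule ℝ V) : Set (W × ℝ) :=
  {q | ∃ x w : V, ∃ A B : ℝ, F x ≤ A ∧ h w ≤ B ∧ (q.1 : V) = w - x ∧ A + B ≤ q.2 + m}

variable {F h : V → EReal} {m : ℝ}

lemma convex_valueEpigraph (hF : Convex ℝ (epigraph F)) (hh : Convex ℝ (epigraph h))
    (W : Submodule ℝ V) : Convex ℝ (valueEpigraph F h m W) := by
  rintro ⟨v₁, r₁⟩ ⟨x₁, w₁, A₁, B₁, hx₁, hw₁, hv₁, hr₁⟩ ⟨v₂, r₂⟩ ⟨x₂, w₂, A₂, B₂, hx₂, hw₂, hv₂, hr₂⟩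
    a b ha hb hab
  dsimp only at hv₁ hv₂ hr₁ hr₂
  refine ⟨a • x₁ + b • x₂, a • w₁ + b • w₂, a * A₁ + b * A₂, a * B₁ + b * B₂,
    le_combo_of_convex_epigraph hF hx₁ hx₂ ha hb hab,
    le_combo_of_convex_epigraph hh hw₁ hw₂ ha hb hab, ?_, ?_⟩
  · simp only [Prod.smul_mk, Prod.mk_add_mk, Submodule.coe_add, Submodule.coe_smul, hv₁, hv₂]
    module
  · have hm : a * m + b * m = m := by rw [← add_mul, hab, one_mul]
    simp only [Prod.smul_mk, Prod.mk_add_mk, smul_eq_mul]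
    nlinarith [mul_le_mul_of_nonneg_left hr₁ ha, mul_le_mul_of_nonneg_left hr₂ hb]

lemma notMem_valueEpigraph_of_neg (hm : ∀ x, (m : EReal) ≤ F x + h x) (W : Submodule ℝ V)
    {r : ℝ} (hr : r < 0) : ((0 : W), r) ∉ valueEpigraph F h m W := by
  rintro ⟨x, w, A, B, hA, hB, hxw, hAB⟩
  obtain rfl : w = x := sub_eq_zero.mp (by simpa using hxw.symm)
  have := (hm w).trans (add_le_add hA hB)
  norm_cast at this
  linarith

lemma mem_interior_valueEpigraph [FiniteDimensional ℝ V] {N₁ N₂ : Submodule ℝ V} {x₀ : V}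
    {M₁ M₂ : ℝ} (hF : ∀ᶠ a : N₁ in 𝓝 0, F (x₀ + a) ≤ M₁)
    (hh : ∀ᶠ c : N₂ in 𝓝 0, h (x₀ + c) ≤ M₂) :
    ((0 : ↥(N₁ ⊔ N₂)), M₁ + M₂ - m + 1) ∈ interior (valueEpigraph F h m (N₁ ⊔ N₂)) := by
  let Φ : (N₁ × N₂) →ₗ[ℝ] ↥(N₁ ⊔ N₂) :=
    LinearMap.codRestrict _
      (N₂.subtype ∘ₗ LinearMap.snd ℝ N₁ N₂ - N₁.subtype ∘ₗ LinearMap.fst ℝ N₁ N₂) fun q =>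
      Submodule.sub_mem _ (Submodule.mem_sup_right q.2.2) (Submodule.mem_sup_left q.1.2)
  have hΦ : Function.Surjective Φ := by
    rintro ⟨v, hv⟩
    obtain ⟨a, ha, c, hc, rfl⟩ := Submodule.mem_sup.mp hv
    exact ⟨(⟨-a, N₁.neg_mem ha⟩, ⟨c, hc⟩), Subtype.ext (by simp [Φ, add_comm])⟩
  have himage : Φ '' {q | F (x₀ + q.1) ≤ M₁ ∧ h (x₀ + q.2) ≤ M₂} ∈ 𝓝 (0 : ↥(N₁ ⊔ N₂)) := by
    have := (Φ.isOpenMap_of_finiteDimensional hΦ).image_mem_nhds (hF.prod_nhds hh)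
    rwa [Prod.mk_zero_zero, map_zero] at this
  rw [mem_interior_iff_mem_nhds]
  refine mem_of_superset (prod_mem_nhds himage (Ioi_mem_nhds (lt_add_one _))) ?_
  rintro ⟨v, r⟩ ⟨⟨⟨a, c⟩, ⟨ha, hc⟩, rfl⟩, hr : M₁ + M₂ - m < r⟩
  exact ⟨x₀ + a, x₀ + c, M₁, M₂, ha, hc, by simp [Φ], by linarith⟩

end ValueEpigraph

section StrongDuality

variable {V : Type*} [NormedAddCommGroup V] [InnerProductSpace ℝ V] {F h : V → EReal} {m : ℝ}

theorem exists_inner_minorant [FiniteDimensional ℝ V] (hFb : ∀ x, F x ≠ ⊥)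
    (hF : Convex ℝ (epigraph F)) (hhb : ∀ x, h x ≠ ⊥) (hh : Convex ℝ (epigraph h))
    (hqual : (intrinsicInterior ℝ {x | F x ≠ ⊤} ∩ intrinsicInterior ℝ {x | h x ≠ ⊤}).Nonempty)
    (hm : ∀ x, (m : EReal) ≤ F x + h x) :
    ∃ u : V, ∀ x w, ((m + ⟪w - x, u⟫ : ℝ) : EReal) ≤ F x + h w := by
  obtain ⟨x₀, hx₀F, hx₀h⟩ := hqual
  obtain ⟨M₁, hM₁⟩ := exists_eventually_le_of_mem_intrinsicInterior hFb hF hx₀F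
  obtain ⟨M₂, hM₂⟩ := exists_eventually_le_of_mem_intrinsicInterior hhb hh hx₀h
  set N₁ := (affineSpan ℝ {x | F x ≠ ⊤}).direction
  set N₂ := (affineSpan ℝ {x | h x ≠ ⊤}).direction
  obtain ⟨ℓ, hℓ⟩ := exists_clm_le_of_mem_interior (convex_valueEpigraph hF hh (N₁ ⊔ N₂))
    (mem_interior_valueEpigraph hM₁ hM₂) (fun _ => notMem_valueEpigraph_of_neg hm _)
  set u := (InnerProductSpace.toDual ℝ ↥(N₁ ⊔ N₂)).symm ℓ
  refine ⟨u, fun x w => ?_⟩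
  rcases eq_top_or_exists_eq_coe (hFb x) with hx | ⟨A, hA⟩
  · simp [hx, EReal.top_add_of_ne_bot (hhb w)]
  rcases eq_top_or_exists_eq_coe (hhb w) with hw | ⟨B, hB⟩
  · simp [hw, hA]
  have hmem : ∀ {φ : V → EReal} {y : V}, φ y ≠ ⊤ → φ x₀ ≠ ⊤ →
      y - x₀ ∈ (affineSpan ℝ {x | φ x ≠ ⊤}).direction := fun hy hx₀ =>
    AffineSubspace.vsub_mem_direction (subset_affineSpan ℝ _ hy) (subset_affineSpan ℝ _ hx₀)
  have hwx : w - x ∈ N₁ ⊔ N₂ := by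
    rw [show w - x = (w - x₀) - (x - x₀) by abel]
    exact Submodule.sub_mem _
      (Submodule.mem_sup_right (hmem (by simp [hB]) (intrinsicInterior_subset hx₀h)))
      (Submodule.mem_sup_left (hmem (by simp [hA]) (intrinsicInterior_subset hx₀F)))
  have hinner : ⟪w - x, (u : V)⟫ = ℓ ⟨w - x, hwx⟩ := by
    rw [real_inner_comm, ← InnerProductSpace.toDual_symm_apply]
    rfl
  have := hℓ (⟨w - x, hwx⟩, A + B - m) ⟨x, w, A, B, hA.le, hB.le, rfl, by linarith⟩
  rw [hA, hB, hinner]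
  norm_cast
  linarith

theorem exists_hasSubgradientAt_of_forall_le [FiniteDimensional ℝ V] (hFb : ∀ x, F x ≠ ⊥)
    (hF : Convex ℝ (epigraph F)) (hhb : ∀ x, h x ≠ ⊥) (hh : Convex ℝ (epigraph h))
    (hqual : (intrinsicInterior ℝ {x | F x ≠ ⊤} ∩ intrinsicInterior ℝ {x | h x ≠ ⊤}).Nonempty)
    {x : V} (hx : ∀ x', F x + h x ≤ F x' + h x') :
    ∃ u, HasSubgradientAt F (-u) x ∧ HasSubgradientAt h u x := by
  obtain ⟨x₀, hx₀F, hx₀h⟩ := hqual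
  have hfin : F x + h x ≠ ⊤ := ne_top_of_le_ne_top
    (EReal.add_ne_top (intrinsicInterior_subset hx₀F) (intrinsicInterior_subset hx₀h)) (hx x₀)
  obtain ⟨A, hA⟩ := exists_eq_coe (fun h' => hfin (by simp [h', EReal.top_add_of_ne_bot (hhb x)]))
    (hFb x)
  obtain ⟨B, hB⟩ := exists_eq_coe (fun h' => hfin (by simp [h', hA])) (hhb x)
  obtain ⟨u, hu⟩ := exists_inner_minorant hFb hF hhb hh ⟨x₀, hx₀F, hx₀h⟩ (m := A + B)
    (fun x' => by simpa [hA, hB] using hx x')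
  refine ⟨u, fun x' => ?_, fun w => ?_⟩
  · have := hu x' x
    rw [hB, add_comm (F x'), coe_le_coe_add_iff] at this
    rw [hA, inner_neg_right, ← inner_neg_left, neg_sub]
    exact le_trans (by norm_cast; linarith) this
  · have := hu x w
    rw [hA, coe_le_coe_add_iff] at this
    rw [hB]
    exact le_trans (by norm_cast; linarith) this

end StrongDuality

section Fenchel

lemma inner_sub_le_fconj (φ : E → EReal) (u w : E) : ((⟪w, u⟫ : ℝ) : EReal) - φ w ≤ fconj φ u :=
  le_iSup (fun x => ((⟪x, u⟫ : ℝ) : EReal) - φ x) w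

lemma HasSubgradientAt.fconj_eq {φ : E → EReal} (hφ : ∀ y, φ y ≠ ⊥) {u x : E}
    (hs : HasSubgradientAt φ u x) (hx : φ x ≠ ⊤) :
    fconj φ u = ((⟪x, u⟫ : ℝ) : EReal) - φ x := by
  obtain ⟨A, hA⟩ := exists_eq_coe hx (hφ x)
  refine le_antisymm (iSup_le fun w => ?_) (inner_sub_le_fconj φ u x)
  rcases eq_top_or_exists_eq_coe (hφ w) with hw | ⟨B, hB⟩
  · simp [hw]
  have := hs w
  rw [hA, hB, inner_sub_left] at *
  norm_cast at this ⊢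
  linarith

lemma hasSubgradientAt_of_fconj_le {φ : E → EReal} (hφ : ∀ y, φ y ≠ ⊥) {u x : E} {A : ℝ}
    (hA : φ x = A) (hle : fconj φ u ≤ ((⟪x, u⟫ : ℝ) : EReal) - φ x) :
    HasSubgradientAt φ u x := by
  intro w
  rcases eq_top_or_exists_eq_coe (hφ w) with hw | ⟨B, hB⟩
  · simp [hw]
  have := (inner_sub_le_fconj φ u w).trans hle
  rw [hA, hB, inner_sub_left] at *
  norm_cast at this ⊢
  linarith

def fenchelDual (F h : E → EReal) (u : E) : EReal := fconj F (-u) + fconj h u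

variable {F h : EuclideanSpace ℝ (Fin p) → EReal}

lemma neg_le_fenchelDual (hF : ∀ y, F y ≠ ⊥) (hh : ∀ y, h y ≠ ⊥) (x u : E) :
    -(F x + h x) ≤ fenchelDual F h u := by
  rcases eq_top_or_exists_eq_coe (hF x) with hFx | ⟨A, hA⟩
  · simp [hFx, EReal.top_add_of_ne_bot (hh x)]
  rcases eq_top_or_exists_eq_coe (hh x) with hhx | ⟨B, hB⟩
  · simp [hhx, hA]
  calc -(F x + h x) = ((⟪x, -u⟫ - A : ℝ) : EReal) + ((⟪x, u⟫ - B : ℝ) : EReal) := by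
        rw [hA, hB, inner_neg_right]; norm_cast; ring
    _ ≤ fenchelDual F h u := add_le_add (by simpa [hA] using inner_sub_le_fconj F (-u) x)
        (by simpa [hB] using inner_sub_le_fconj h u x)

lemma fenchelDual_eq_of_hasSubgradientAt (hF : ∀ y, F y ≠ ⊥) (hh : ∀ y, h y ≠ ⊥) {x u : E}
    (hsF : HasSubgradientAt F (-u) x) (hsh : HasSubgradientAt h u x) (hFx : F x ≠ ⊤)
    (hhx : h x ≠ ⊤) : fenchelDual F h u = -(F x + h x) := by
  obtain ⟨A, hA⟩ := exists_eq_coe hFx (hF x)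
  obtain ⟨B, hB⟩ := exists_eq_coe hhx (hh x)
  rw [fenchelDual, hsF.fconj_eq hF hFx, hsh.fconj_eq hh hhx, hA, hB, inner_neg_right]
  norm_cast
  ring

lemma hasSubgradientAt_of_fenchelDual_le (hF : ∀ y, F y ≠ ⊥) (hh : ∀ y, h y ≠ ⊥) {x u : E}
    {A B : ℝ} (hA : F x = A) (hB : h x = B) (hle : fenchelDual F h u ≤ -(F x + h x)) :
    HasSubgradientAt F (-u) x ∧ HasSubgradientAt h u x := by
  have hsum : -(F x + h x) = (((⟪x, -u⟫ - A) + (⟪x, u⟫ - B) : ℝ) : EReal) := by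
    rw [hA, hB, inner_neg_right]; norm_cast; ring
  rw [hsum, fenchelDual] at hle
  have hF' := inner_sub_le_fconj F (-u) x
  have hh' := inner_sub_le_fconj h u x
  rw [hA] at hF'
  rw [hB] at hh'
  refine ⟨hasSubgradientAt_of_fconj_le hF hA ?_, hasSubgradientAt_of_fconj_le hh hB ?_⟩
  · rw [hA]
    exact_mod_cast le_coe_of_add_le_coe (by exact_mod_cast hh') hle
  · rw [hB]
    rw [add_comm (fconj F (-u)), add_comm (⟪x, -u⟫ - A)] at hle
    exact_mod_cast le_coe_of_add_le_coe (by exact_mod_cast hF') hle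

theorem primal_dual_optimal_iff (hFb : ∀ x, F x ≠ ⊥) (hF : Convex ℝ (epigraph F))
    (hhb : ∀ x, h x ≠ ⊥) (hh : Convex ℝ (epigraph h))
    (hqual : (intrinsicInterior ℝ {x | F x ≠ ⊤} ∩ intrinsicInterior ℝ {x | h x ≠ ⊤}).Nonempty)
    {x u : E} :
    ((∀ x', F x + h x ≤ F x' + h x') ∧ ∀ u', fenchelDual F h u ≤ fenchelDual F h u') ↔
      HasSubgradientAt F (-u) x ∧ HasSubgradientAt h u x := by
  have hFp : ∃ w, F w ≠ ⊤ := hqual.imp fun _ hw => intrinsicInterior_subset hw.1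
  have hhp : ∃ w, h w ≠ ⊤ := hqual.imp fun _ hw => intrinsicInterior_subset hw.2
  constructor
  · rintro ⟨hx, hu⟩
    obtain ⟨u', hF', hh'⟩ := exists_hasSubgradientAt_of_forall_le hFb hF hhb hh hqual hx
    obtain ⟨A, hA⟩ := exists_eq_coe (hF'.ne_top hFp) (hFb x)
    obtain ⟨B, hB⟩ := exists_eq_coe (hh'.ne_top hhp) (hhb x)
    refine hasSubgradientAt_of_fenchelDual_le hFb hhb hA hB ((hu u').trans ?_)
    exact (fenchelDual_eq_of_hasSubgradientAt hFb hhb hF' hh' (hF'.ne_top hFp)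
      (hh'.ne_top hhp)).le
  · rintro ⟨hsF, hsh⟩
    have hD := fenchelDual_eq_of_hasSubgradientAt hFb hhb hsF hsh (hsF.ne_top hFp) (hsh.ne_top hhp)
    refine ⟨fun x' => ?_, fun u' => hD ▸ neg_le_fenchelDual hFb hhb x u'⟩
    have := neg_le_fenchelDual hFb hhb x' u
    rwa [hD, EReal.neg_le_neg_iff] at this

end Fenchel

section Prox

variable {d : Fin p → ℝ} {γ : ℝ}

def diagScale (d : Fin p → ℝ) : E →ₗ[ℝ] E := Matrix.toEuclideanLin (Matrix.diagonal d)

@[simp]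
lemma diagScale_apply (v : E) (j : Fin p) : diagScale d v j = d j * v j := by
  simp [diagScale, Matrix.toLpLin_apply, Matrix.mulVec_diagonal]

lemma exists_eq_add_smul_diagScale (hd : ∀ j, d j ≠ 0) (hγ : γ ≠ 0) (y z : E) :
    ∃ u, y = z + γ • diagScale d u := by
  refine ⟨γ⁻¹ • diagScale d⁻¹ (y - z), ?_⟩
  ext j
  simp only [PiLp.add_apply, PiLp.smul_apply, diagScale_apply, PiLp.sub_apply, Pi.inv_apply,
    smul_eq_mul]
  field_simp [hd j]
  ring

lemma sqDinv_pos (hd : ∀ j, 0 < d j) {v : E} (hv : v ≠ 0) : 0 < sqDinv d v := by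
  obtain ⟨j, hj⟩ : ∃ j, v j ≠ 0 := by
    by_contra! h
    exact hv (by ext j; simp [h j])
  exact Finset.sum_pos' (fun i _ => by have := hd i; positivity)
    ⟨j, Finset.mem_univ j, by have := hd j; positivity⟩

lemma sqDinv_sub_lineMap (hd : ∀ j, d j ≠ 0) (hγ : γ ≠ 0) (z u w : E) (t : ℝ) :
    1 / (2 * γ) * sqDinv d (z + γ • diagScale d u - AffineMap.lineMap z w t) =
      1 / (2 * γ) * sqDinv d (γ • diagScale d u) - t * ⟪w - z, u⟫ +
        t ^ 2 * (1 / (2 * γ) * sqDinv d (w - z)) := by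
  simp only [sqDinv, AffineMap.lineMap_apply_module, PiLp.inner_apply, RCLike.inner_apply,
    conj_trivial, Finset.mul_sum, ← Finset.sum_sub_distrib, ← Finset.sum_add_distrib]
  refine Finset.sum_congr rfl fun j _ => ?_
  simp only [PiLp.add_apply, PiLp.sub_apply, PiLp.smul_apply, diagScale_apply, smul_eq_mul]
  field_simp [hd j]
  ring

variable {φ : EuclideanSpace ℝ (Fin p) → EReal}

/-- `z` minimises `φ + q` with `q w = ‖z + γDu - w‖²_{D⁻¹} / (2γ)`, whose derivative at `z` in the
direction `w - z` is `⟪-u, w - z⟫`; the sum rule then gives `u ∈ ∂φ(z)`. -/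
lemma hasSubgradientAt_of_isProxDinv (hφb : ∀ x, φ x ≠ ⊥) (hφ : Convex ℝ (epigraph φ))
    (hφp : ∃ x, φ x ≠ ⊤) (hd : ∀ j, d j ≠ 0) (hγ : γ ≠ 0) {z u : E}
    (hprox : IsProxDinv d γ φ (z + γ • diagScale d u) z) : HasSubgradientAt φ u z := by
  set q : E → ℝ := fun w => 1 / (2 * γ) * sqDinv d (z + γ • diagScale d u - w)
  have hz : φ z ≠ ⊤ := by
    obtain ⟨w, hw⟩ := hφp
    intro hz
    have := hprox w
    rw [hz, EReal.top_add_coe, top_le_iff] at this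
    exact EReal.add_ne_top hw (EReal.coe_ne_top _) this
  have hs : HasSubgradientAt (fun w => (q w : EReal) + φ w) 0 z := fun w => by
    simpa [q, add_comm] using hprox w
  have hq : ∀ w, HasDerivAt (fun t : ℝ => q (AffineMap.lineMap z w t)) ⟪-u, w - z⟫ 0 := by
    intro w
    simp only [q, sqDinv_sub_lineMap hd hγ]
    refine HasDerivAt.congr_deriv ((((hasDerivAt_id (0 : ℝ)).mul_const ⟪w - z, u⟫).const_sub
      (1 / (2 * γ) * sqDinv d (γ • diagScale d u))).add
      ((hasDerivAt_pow 2 (0 : ℝ)).mul_const (1 / (2 * γ) * sqDinv d (w - z)))) ?_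
    rw [inner_neg_left, real_inner_comm]
    simp
  simpa using hs.sub_of_hasDerivAt hφb hφ hq hz

lemma IsProxDinv.eq_of_hasSubgradientAt (hφb : ∀ x, φ x ≠ ⊥) (hφp : ∃ x, φ x ≠ ⊤)
    (hd : ∀ j, 0 < d j) (hγ : 0 < γ) {z z' u : E}
    (hprox : IsProxDinv d γ φ (z + γ • diagScale d u) z') (hs : HasSubgradientAt φ u z) :
    z' = z := by
  obtain ⟨A, hA⟩ := exists_eq_coe (hs.ne_top hφp) (hφb z)
  have hquad := sqDinv_sub_lineMap (fun j => (hd j).ne') hγ.ne' z u z' 1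
  simp only [AffineMap.lineMap_apply_one, one_pow, one_mul] at hquad
  have h1 := hprox z
  have h2 := hs z'
  rw [add_sub_cancel_left, hquad, hA, ← EReal.coe_add] at h1
  rw [hA] at h2
  have hz' : φ z' ≠ ⊤ := fun htop => by
    rw [htop, EReal.top_add_coe, top_le_iff] at h1
    exact EReal.coe_ne_top _ h1
  obtain ⟨A', hA'⟩ := exists_eq_coe hz' (hφb z')
  rw [hA'] at h1 h2
  norm_cast at h1 h2
  by_contra hne
  have := sqDinv_pos hd (sub_ne_zero.mpr hne)
  have : 0 < 1 / (2 * γ) * sqDinv d (z' - z) := by positivity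
  linarith

end Prox

section Splitting

variable {f : EuclideanSpace ℝ (Fin p) → ℝ}
  {gradf : EuclideanSpace ℝ (Fin p) → EuclideanSpace ℝ (Fin p)}
  {g h : EuclideanSpace ℝ (Fin p) → EReal}

theorem splitting_fixed_point_iff (hg : ProperLscConvex g) (hh : ProperLscConvex h)
    {d : Fin p → ℝ} (hd : ∀ j, 0 < d j) {γ : ℝ} (hγ : 0 < γ) {proxg proxh : E → E}
    (hproxg : ∀ x, IsProxDinv d γ g x (proxg x)) (hproxh : ∀ x, IsProxDinv d γ h x (proxh x))
    (y : E) :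
    y - proxh y + proxg (2 • proxh y - y - γ • diagScale d (gradf (proxh y))) = y ↔
      ∃ x u, HasSubgradientAt h u x ∧ HasSubgradientAt g (-u - gradf x) x ∧
        y = x + γ • diagScale d u := by
  have hd' : ∀ j, d j ≠ 0 := fun j => (hd j).ne'
  have harg : ∀ x u y, y = x + γ • diagScale d u →
      2 • x - y - γ • diagScale d (gradf x) = x + γ • diagScale d (-u - gradf x) := by
    rintro x u y rfl
    rw [map_sub, map_neg]
    module
  constructor
  · intro hfix
    obtain ⟨u, hy⟩ := exists_eq_add_smul_diagScale hd' hγ.ne' y (proxh y)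
    have hz : proxg (2 • proxh y - y - γ • diagScale d (gradf (proxh y))) = proxh y := by
      linear_combination (norm := module) hfix
    have hproxz := hproxg (2 • proxh y - y - γ • diagScale d (gradf (proxh y)))
    rw [hz, harg _ _ _ hy] at hproxz
    refine ⟨proxh y, u, ?_, ?_, hy⟩
    · exact hasSubgradientAt_of_isProxDinv hh.ne_bot hh.convex_epigraph hh.proper hd' hγ.ne'
        (hy ▸ hproxh y)
    · exact hasSubgradientAt_of_isProxDinv hg.ne_bot hg.convex_epigraph hg.proper hd' hγ.ne'
        hproxz
  · rintro ⟨x, u, hsh, hsg, rfl⟩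
    rw [IsProxDinv.eq_of_hasSubgradientAt hh.ne_bot hh.proper hd hγ (hproxh _) hsh, harg _ _ _ rfl,
      IsProxDinv.eq_of_hasSubgradientAt hg.ne_bot hg.proper hd hγ (hproxg _) hsg]
    abel

theorem primal_dual_optimal_iff_hasSubgradientAt (hfconv : ConvexOn ℝ univ f)
    (hfdiff : ∀ x, HasGradientAt f (gradf x) x) (hg : ProperLscConvex g) (hh : ProperLscConvex h)
    (hqual : (intrinsicInterior ℝ {x | g x ≠ ⊤} ∩ intrinsicInterior ℝ {x | h x ≠ ⊤}).Nonempty)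
    {x u : E} :
    ((∀ x', (f x : EReal) + g x + h x ≤ f x' + g x' + h x') ∧
      ∀ u', fenchelDual (fun y => (f y : EReal) + g y) h u ≤
        fenchelDual (fun y => (f y : EReal) + g y) h u') ↔
      HasSubgradientAt h u x ∧ HasSubgradientAt g (-u - gradf x) x := by
  have hdom : {x | (f x : EReal) + g x ≠ ⊤} = {x | g x ≠ ⊤} := by
    ext x
    simp [EReal.add_ne_top_iff_ne_top_right (EReal.coe_ne_bot (f x)) (EReal.coe_ne_top (f x))]
  rw [primal_dual_optimal_iff (fun x => by simpa [EReal.add_eq_bot_iff] using hg.ne_bot x)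
    (convex_epigraph_coe_add hfconv hg.convex_epigraph) hh.ne_bot hh.convex_epigraph
    (hdom ▸ hqual), hasSubgradientAt_coe_add_iff hfconv hg.ne_bot hg.convex_epigraph hg.proper
    (hfdiff x), and_comm]

end Splitting

end ThreeOperatorSplitting

open ThreeOperatorSplitting

theorem fixed_point_characterization_general
    (f : EuclideanSpace ℝ (Fin p) → ℝ)
    (hfconv : ConvexOn ℝ Set.univ f)
    (gradf : EuclideanSpace ℝ (Fin p) → EuclideanSpace ℝ (Fin p))
    (hfdiff : ∀ x, HasGradientAt f (gradf x) x)
    (g h : EuclideanSpace ℝ (Fin p) → EReal)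
    (hg : ProperLscConvex g) (hh : ProperLscConvex h)
    (hqual : (intrinsicInterior ℝ {x | g x ≠ ⊤} ∩ intrinsicInterior ℝ {x | h x ≠ ⊤}).Nonempty)
    (d : Fin p → ℝ) (hd : ∀ j, 0 < d j)
    (Dop : EuclideanSpace ℝ (Fin p) → EuclideanSpace ℝ (Fin p))
    (hDop : ∀ v j, Dop v j = d j * v j)
    (γ : ℝ) (hγ : 0 < γ)
    (proxg proxh : EuclideanSpace ℝ (Fin p) → EuclideanSpace ℝ (Fin p))
    (hproxg : ∀ x, IsProxDinv d γ g x (proxg x))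
    (hproxh : ∀ x, IsProxDinv d γ h x (proxh x))
    -- the operator G_γ
    (G : EuclideanSpace ℝ (Fin p) → EuclideanSpace ℝ (Fin p))
    (hG : ∀ y, G y = y - proxh y + proxg (2 • proxh y - y - γ • Dop (gradf (proxh y))))
    -- primal and dual objectives and their solution sets
    (P : EuclideanSpace ℝ (Fin p) → EReal)
    (hP : ∀ x, P x = ((f x : ℝ) : EReal) + g x + h x)
    (Dobj : EuclideanSpace ℝ (Fin p) → EReal)
    (hDobj : ∀ u, Dobj u = fconj (fun x => ((f x : ℝ) : EReal) + g x) (-u) + fconj h u)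
    (Pstar Dstar : Set (EuclideanSpace ℝ (Fin p)))
    (hPstar : Pstar = {x | ∀ x', P x ≤ P x'})
    (hDstar : Dstar = {u | ∀ u', Dobj u ≤ Dobj u'}) :
    {y | G y = y} = {y | ∃ x u, x ∈ Pstar ∧ u ∈ Dstar ∧ y = x + γ • Dop u} := by
  obtain rfl : Dop = diagScale d := funext fun v => by ext j; rw [hDop, diagScale_apply]
  obtain rfl : Dobj = fenchelDual (fun x => (f x : EReal) + g x) h := funext hDobj
  obtain rfl : P = fun x => (f x : EReal) + g x + h x := funext hP
  subst hPstar hDstar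
  ext y
  simp only [mem_ofPred_eq]
  rw [hG, splitting_fixed_point_iff hg hh hd hγ hproxg hproxh]
  refine exists₂_congr fun x u => ?_
  rw [← and_assoc, ← and_assoc, primal_dual_optimal_iff_hasSubgradientAt hfconv hfdiff hg hh hqual]

/-- fixed points of the generalized three operator splitting:
`Fix(G_γ) = 𝒫* + γ D 𝒟*`, the weighted Minkowski sum of the primal and dual solution sets. -/
theorem fixed_point_characterization
    (f : EuclideanSpace ℝ (Fin p) → ℝ)
    (hfconv : ConvexOn ℝ Set.univ f)
    (gradf : EuclideanSpace ℝ (Fin p) → EuclideanSpace ℝ (Fin p))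
    (hfdiff : ∀ x, HasGradientAt f (gradf x) x)
    (Lf : ℝ) (hflip : ∀ x y, ‖gradf x - gradf y‖ ≤ Lf * ‖x - y‖)
    (g h : EuclideanSpace ℝ (Fin p) → EReal)
    (hg : ProperLscConvex g) (hh : ProperLscConvex h)
    (hqual : (intrinsicInterior ℝ {x | g x ≠ ⊤} ∩ intrinsicInterior ℝ {x | h x ≠ ⊤}).Nonempty)
    (d : Fin p → ℝ) (hd : ∀ j, 0 < d j)
    (Dop : EuclideanSpace ℝ (Fin p) → EuclideanSpace ℝ (Fin p))
    (hDop : ∀ v j, Dop v j = d j * v j)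
    (γ : ℝ) (hγ : 0 < γ)
    (proxg proxh : EuclideanSpace ℝ (Fin p) → EuclideanSpace ℝ (Fin p))
    (hproxg : ∀ x, IsProxDinv d γ g x (proxg x))
    (hproxh : ∀ x, IsProxDinv d γ h x (proxh x))
    -- the operator G_γ
    (G : EuclideanSpace ℝ (Fin p) → EuclideanSpace ℝ (Fin p))
    (hG : ∀ y, G y = y - proxh y + proxg (2 • proxh y - y - γ • Dop (gradf (proxh y))))
    -- primal and dual objectives and their solution sets
    (P : EuclideanSpace ℝ (Fin p) → EReal)
    (hP : ∀ x, P x = ((f x : ℝ) : EReal) + g x + h x)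
    (Dobj : EuclideanSpace ℝ (Fin p) → EReal)
    (hDobj : ∀ u, Dobj u = fconj (fun x => ((f x : ℝ) : EReal) + g x) (-u) + fconj h u)
    (Pstar Dstar : Set (EuclideanSpace ℝ (Fin p)))
    (hPstar : Pstar = {x | ∀ x', P x ≤ P x'})
    (hDstar : Dstar = {u | ∀ u', Dobj u ≤ Dobj u'}) :
    {y | G y = y} = {y | ∃ x u, x ∈ Pstar ∧ u ∈ Dstar ∧ y = x + γ • Dop u} :=
  fixed_point_characterization_general f hfconv gradf hfdiff g h hg hh hqual d hd Dop hDop γ hγ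
    proxg proxh hproxg hproxh G hG P hP Dobj hDobj Pstar Dstar hPstar hDstar
end
end

section
/- Let y ∈ Fix(G_γ) and set z = prox^{D⁻¹}_{γh}(y). Then: (i) z is a minimizer of the primal objective P(x) = f(x)+g(x)+h(x); (ii) prox^{D⁻¹}_{γh}(y) = prox^{D⁻¹}_{γg}(2z − y − γ D∇f(z)); and (iii) u = D⁻¹(y − z)/γ is a minimizer of the dual objective D(u) = (f+g)*(−u) + h*(u). -/
/-!
The prox optimality condition turns `z = prox^{D⁻¹}_{γh}(y)` into the subgradient inclusion
`u := γ⁻¹ D⁻¹ (y - z) ∈ ∂h(z)`.  The fixed-point equation `G_γ y = y` says exactly that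
`z = prox^{D⁻¹}_{γg}(2z - y - γ D ∇f(z))`, which in the same way gives `-u - ∇f(z) ∈ ∂g(z)`.
Together with `∇f(z) ∈ ∂f(z)` this yields `-u ∈ ∂(f + g)(z)` and `0 ∈ ∂(f + g + h)(z)`, so `z`
minimizes the primal objective.  At a subgradient pair the Fenchel–Young inequality is an equality,
so the dual objective equals `-P(z)` at `u`, while it is at least `-P(z)` everywhere.
-/

open Finset
open scoped RealInnerProductSpace

noncomputable section

variable {p : ℕ}

section Subgradient

variable {E : Type*} [NormedAddCommGroup E] [InnerProductSpace ℝ E]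

def HasSubgradientAt (φ : E → EReal) (u z : E) : Prop :=
  ∀ w, φ z + ((⟪u, w - z⟫ : ℝ) : EReal) ≤ φ w

theorem HasSubgradientAt.add {φ ψ : E → EReal} {u v z : E} (hφ : HasSubgradientAt φ u z)
    (hψ : HasSubgradientAt ψ v z) : HasSubgradientAt (fun x => φ x + ψ x) (u + v) z := by
  intro w
  calc φ z + ψ z + ((⟪u + v, w - z⟫ : ℝ) : EReal)
      = (φ z + ((⟪u, w - z⟫ : ℝ) : EReal)) + (ψ z + ((⟪v, w - z⟫ : ℝ) : EReal)) := by
        rw [inner_add_left, EReal.coe_add]; ac_rfl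
    _ ≤ φ w + ψ w := add_le_add (hφ w) (hψ w)

theorem ConvexOn.hasSubgradientAt_of_hasGradientAt [CompleteSpace E] {f : E → ℝ} {G z : E}
    (hf : ConvexOn ℝ Set.univ f) (hG : HasGradientAt f G z) :
    HasSubgradientAt (fun x => (f x : EReal)) G z := by
  intro w
  have hline : ConvexOn ℝ Set.univ (f ∘ AffineMap.lineMap (k := ℝ) z w) := by
    simpa using hf.comp_affineMap (AffineMap.lineMap z w)
  have hderiv : HasDerivAt (f ∘ AffineMap.lineMap (k := ℝ) z w) ⟪G, w - z⟫ 0 := by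
    have := hG.hasFDerivAt
    rw [← AffineMap.lineMap_apply_zero (k := ℝ) z w] at this
    simpa using this.comp_hasDerivAt 0 AffineMap.hasDerivAt_lineMap
  have := hline.le_slope_of_hasDerivAt (Set.mem_univ 0) (Set.mem_univ 1) one_pos hderiv
  rw [slope_def_field] at this
  simp only [Function.comp_apply, AffineMap.lineMap_apply_one, AffineMap.lineMap_apply_zero,
    sub_zero, div_one] at this
  exact EReal.coe_le_coe_iff.2 (by linarith)

end Subgradient

theorem le_of_forall_le_add_mul {a b C : ℝ} (H : ∀ t : ℝ, 0 < t → t ≤ 1 → a ≤ b + t * C) :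
    a ≤ b := by
  have hlim : Filter.Tendsto (fun t : ℝ => b + t * C) (nhdsWithin 0 (Set.Ioi 0)) (nhds b) := by
    simpa using ((by fun_prop : Continuous fun t : ℝ => b + t * C).tendsto 0).mono_left
      nhdsWithin_le_nhds
  refine ge_of_tendsto hlim ?_
  filter_upwards [Ioc_mem_nhdsGT one_pos] with t ht using H t ht.1 ht.2

theorem sqDinv_sub_smul (d : Fin p → ℝ) {γ : ℝ} (hγ : γ ≠ 0) {u v : EuclideanSpace ℝ (Fin p)}
    (hu : ∀ j, u j = γ⁻¹ * ((d j)⁻¹ * v j)) (t : ℝ) (e : EuclideanSpace ℝ (Fin p)) :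
    1 / (2 * γ) * sqDinv d (v - t • e)
      = 1 / (2 * γ) * sqDinv d v - t * ⟪u, e⟫ + t ^ 2 * (1 / (2 * γ) * sqDinv d e) := by
  simp only [sqDinv, PiLp.inner_apply, RCLike.inner_apply, conj_trivial, hu, PiLp.sub_apply,
    PiLp.smul_apply, smul_eq_mul, Finset.mul_sum, ← Finset.sum_sub_distrib,
    ← Finset.sum_add_distrib]
  refine Finset.sum_congr rfl fun j _ => ?_
  field_simp
  ring

namespace IsProxDinv

variable {d : Fin p → ℝ} {γ : ℝ} {φ : EuclideanSpace ℝ (Fin p) → EReal}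
  {x z : EuclideanSpace ℝ (Fin p)}

theorem apply_ne_top (hz : IsProxDinv d γ φ x z) {w : EuclideanSpace ℝ (Fin p)} (hw : φ w ≠ ⊤) :
    φ z ≠ ⊤ := by
  intro htop
  have := hz w
  rw [htop, EReal.top_add_coe, top_le_iff] at this
  exact EReal.add_ne_top hw (EReal.coe_ne_top _) this

theorem exists_eq_coe (hz : IsProxDinv d γ φ x z) (hφ : ProperLscConvex φ) :
    ∃ c : ℝ, φ z = c := by
  obtain ⟨w, hw⟩ := hφ.proper
  exact ⟨(φ z).toReal, (EReal.coe_toReal (hz.apply_ne_top hw) (hφ.ne_bot z)).symm⟩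

theorem hasSubgradientAt (hz : IsProxDinv d γ φ x z) (hφ : ProperLscConvex φ) (hγ : γ ≠ 0)
    {u : EuclideanSpace ℝ (Fin p)} (hu : ∀ j, u j = γ⁻¹ * ((d j)⁻¹ * (x j - z j))) :
    HasSubgradientAt φ u z := by
  intro w
  rcases eq_or_ne (φ w) ⊤ with hw | hw
  · rw [hw]; exact le_top
  obtain ⟨a, ha⟩ : ∃ a : ℝ, φ z = a :=
    ⟨(φ z).toReal, (EReal.coe_toReal (hz.apply_ne_top hw) (hφ.ne_bot z)).symm⟩
  obtain ⟨b, hb⟩ : ∃ b : ℝ, φ w = b := ⟨(φ w).toReal, (EReal.coe_toReal hw (hφ.ne_bot w)).symm⟩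
  rw [ha, hb]
  have hu' : ∀ j, u j = γ⁻¹ * ((d j)⁻¹ * (x - z) j) := hu
  set C := 1 / (2 * γ) * sqDinv d (w - z)
  suffices ∀ t : ℝ, 0 < t → t ≤ 1 → a + ⟪u, w - z⟫ ≤ b + t * C from
    EReal.coe_le_coe_iff.2 (le_of_forall_le_add_mul this)
  intro t ht0 ht1
  have hconv : φ (z + t • (w - z)) ≤ (((1 - t) * a + t * b : ℝ) : EReal) := by
    have := hφ.convex z w (1 - t) t (by linarith) ht0.le (by ring)
    rw [ha, hb, show (1 - t) • z + t • w = z + t • (w - z) by module] at this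
    exact_mod_cast this
  have hprox : a + 1 / (2 * γ) * sqDinv d (x - z)
      ≤ (1 - t) * a + t * b + 1 / (2 * γ) * sqDinv d (x - z - t • (w - z)) := by
    have := (hz (z + t • (w - z))).trans (add_le_add hconv le_rfl)
    rw [ha, sub_add_eq_sub_sub] at this
    exact_mod_cast this
  rw [sqDinv_sub_smul d hγ hu'] at hprox
  refine le_of_mul_le_mul_left ?_ ht0
  nlinarith

end IsProxDinv

theorem inner_sub_le_fconj (φ : EuclideanSpace ℝ (Fin p) → EReal) (z u : EuclideanSpace ℝ (Fin p)) :
    ((⟪z, u⟫ : ℝ) : EReal) - φ z ≤ fconj φ u :=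
  le_iSup (fun x => ((⟪x, u⟫ : ℝ) : EReal) - φ x) z

theorem HasSubgradientAt.fconj_eq {φ : EuclideanSpace ℝ (Fin p) → EReal}
    {u z : EuclideanSpace ℝ (Fin p)} {c : ℝ} (hs : HasSubgradientAt φ u z) (hc : φ z = c) :
    fconj φ u = ((⟪z, u⟫ - c : ℝ) : EReal) := by
  refine le_antisymm (iSup_le fun x => ?_) (by simpa [hc] using inner_sub_le_fconj φ z u)
  have hx := hs x
  rw [hc] at hx
  generalize φ x = r at hx ⊢
  induction r using EReal.rec with
  | bot => exact absurd hx (by simp)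
  | coe b =>
    have : c + ⟪u, x - z⟫ ≤ b := by exact_mod_cast hx
    rw [inner_sub_right, real_inner_comm x, real_inner_comm z] at this
    exact_mod_cast (by linarith : ⟪x, u⟫ - b ≤ ⟪z, u⟫ - c)
  | top => simp

theorem HasSubgradientAt.fconj_neg_add_fconj_le {φ ψ : EuclideanSpace ℝ (Fin p) → EReal}
    {u z : EuclideanSpace ℝ (Fin p)} {a b : ℝ} (hφ : HasSubgradientAt φ (-u) z)
    (hψ : HasSubgradientAt ψ u z) (ha : φ z = a) (hb : ψ z = b) (u' : EuclideanSpace ℝ (Fin p)) :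
    fconj φ (-u) + fconj ψ u ≤ fconj φ (-u') + fconj ψ u' := by
  rw [hφ.fconj_eq ha, hψ.fconj_eq hb]
  calc ((⟪z, -u⟫ - a : ℝ) : EReal) + ((⟪z, u⟫ - b : ℝ) : EReal)
      = ((⟪z, -u'⟫ - a : ℝ) : EReal) + ((⟪z, u'⟫ - b : ℝ) : EReal) := by
        simp only [inner_neg_right]; norm_cast; ring_nf
    _ ≤ fconj φ (-u') + fconj ψ u' := by
        refine add_le_add ?_ ?_
        · simpa [ha] using inner_sub_le_fconj φ z (-u')
        · simpa [hb] using inner_sub_le_fconj ψ z u'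

theorem fixed_point_gives_minimizers_general
    (f : EuclideanSpace ℝ (Fin p) → ℝ)
    (hfconv : ConvexOn ℝ Set.univ f)
    (gradf : EuclideanSpace ℝ (Fin p) → EuclideanSpace ℝ (Fin p))
    (hfdiff : ∀ x, HasGradientAt f (gradf x) x)
    (g h : EuclideanSpace ℝ (Fin p) → EReal)
    (hg : ProperLscConvex g) (hh : ProperLscConvex h)
    (d : Fin p → ℝ) (hd : ∀ j, 0 < d j)
    (Dop Dinvop : EuclideanSpace ℝ (Fin p) → EuclideanSpace ℝ (Fin p))
    (hDop : ∀ v j, Dop v j = d j * v j)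
    (hDinvop : ∀ v j, Dinvop v j = (d j)⁻¹ * v j)
    (γ : ℝ) (hγ : 0 < γ)
    (proxg proxh : EuclideanSpace ℝ (Fin p) → EuclideanSpace ℝ (Fin p))
    (hproxg : ∀ x, IsProxDinv d γ g x (proxg x))
    (hproxh : ∀ x, IsProxDinv d γ h x (proxh x))
    -- the operator G_γ
    (G : EuclideanSpace ℝ (Fin p) → EuclideanSpace ℝ (Fin p))
    (hG : ∀ y, G y = y - proxh y + proxg (2 • proxh y - y - γ • Dop (gradf (proxh y))))
    -- primal and dual objectives
    (P : EuclideanSpace ℝ (Fin p) → EReal)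
    (hP : ∀ x, P x = ((f x : ℝ) : EReal) + g x + h x)
    (Dobj : EuclideanSpace ℝ (Fin p) → EReal)
    (hDobj : ∀ u, Dobj u = fconj (fun x => ((f x : ℝ) : EReal) + g x) (-u) + fconj h u)
    -- a fixed point y of G_γ, and z = prox^{D⁻¹}_{γh}(y)
    (y : EuclideanSpace ℝ (Fin p)) (hy : G y = y)
    (z : EuclideanSpace ℝ (Fin p)) (hzdef : z = proxh y) :
    (∀ x', P z ≤ P x') ∧
      proxh y = proxg (2 • z - y - γ • Dop (gradf z)) ∧
      (∀ u', Dobj (γ⁻¹ • Dinvop (y - z)) ≤ Dobj u') := by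
  set xg := 2 • z - y - γ • Dop (gradf z)
  have hfix : proxg xg = z := by
    have := hG y
    rw [hy, ← hzdef] at this
    rw [eq_sub_of_add_eq' this.symm, sub_sub_cancel]
  set u := γ⁻¹ • Dinvop (y - z)
  have hsub_h : HasSubgradientAt h u z :=
    (hzdef ▸ hproxh y).hasSubgradientAt hh hγ.ne' fun j => by simp [u, hDinvop]
  -- `xg - z = (z - y) - γ D ∇f(z)`, so `γ⁻¹ D⁻¹ (xg - z) = -u - ∇f(z)`
  have hsub_g : HasSubgradientAt g (-u - gradf z) z :=
    (hfix ▸ hproxg xg).hasSubgradientAt hg hγ.ne' fun j => by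
      have := (hd j).ne'
      simp only [u, xg, PiLp.sub_apply, PiLp.neg_apply, PiLp.smul_apply, smul_eq_mul,
        nsmul_eq_mul, Nat.cast_ofNat, hDop, hDinvop]
      field_simp
      ring
  have hsub_fg : HasSubgradientAt (fun x => ((f x : ℝ) : EReal) + g x) (-u) z := by
    simpa using (hfconv.hasSubgradientAt_of_hasGradientAt (hfdiff z)).add hsub_g
  obtain ⟨a, ha⟩ := (hfix ▸ hproxg xg).exists_eq_coe hg
  obtain ⟨b, hb⟩ := (hzdef ▸ hproxh y).exists_eq_coe hh
  refine ⟨fun x' => ?_, by rw [hfix, hzdef], fun u' => ?_⟩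
  · simpa [funext hP] using hsub_fg.add hsub_h x'
  · rw [hDobj, hDobj]
    exact hsub_fg.fconj_neg_add_fconj_le hsub_h (a := f z + a)
      (by simp only [ha, EReal.coe_add]) hb u'

/-- minimizers from a fixed point.  If `y ∈ Fix(G_γ)` and
`z = prox^{D⁻¹}_{γh}(y)`, then (i) `z` minimizes the primal objective `P = f + g + h`;
(ii) `prox^{D⁻¹}_{γh}(y) = prox^{D⁻¹}_{γg}(2z − y − γ D ∇f(z))`; and
(iii) `u = D⁻¹(y − z)/γ` minimizes the dual objective `D(u) = (f+g)*(−u) + h*(u)`. -/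
theorem fixed_point_gives_minimizers
    (f : EuclideanSpace ℝ (Fin p) → ℝ)
    (hfconv : ConvexOn ℝ Set.univ f)
    (gradf : EuclideanSpace ℝ (Fin p) → EuclideanSpace ℝ (Fin p))
    (hfdiff : ∀ x, HasGradientAt f (gradf x) x)
    (Lf : ℝ) (hflip : ∀ x y, ‖gradf x - gradf y‖ ≤ Lf * ‖x - y‖)
    (g h : EuclideanSpace ℝ (Fin p) → EReal)
    (hg : ProperLscConvex g) (hh : ProperLscConvex h)
    (hqual : (intrinsicInterior ℝ {x | g x ≠ ⊤} ∩ intrinsicInterior ℝ {x | h x ≠ ⊤}).Nonempty)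
    (d : Fin p → ℝ) (hd : ∀ j, 0 < d j)
    (Dop Dinvop : EuclideanSpace ℝ (Fin p) → EuclideanSpace ℝ (Fin p))
    (hDop : ∀ v j, Dop v j = d j * v j)
    (hDinvop : ∀ v j, Dinvop v j = (d j)⁻¹ * v j)
    (γ : ℝ) (hγ : 0 < γ)
    (proxg proxh : EuclideanSpace ℝ (Fin p) → EuclideanSpace ℝ (Fin p))
    (hproxg : ∀ x, IsProxDinv d γ g x (proxg x))
    (hproxh : ∀ x, IsProxDinv d γ h x (proxh x))
    -- the operator G_γ
    (G : EuclideanSpace ℝ (Fin p) → EuclideanSpace ℝ (Fin p))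
    (hG : ∀ y, G y = y - proxh y + proxg (2 • proxh y - y - γ • Dop (gradf (proxh y))))
    -- primal and dual objectives
    (P : EuclideanSpace ℝ (Fin p) → EReal)
    (hP : ∀ x, P x = ((f x : ℝ) : EReal) + g x + h x)
    (Dobj : EuclideanSpace ℝ (Fin p) → EReal)
    (hDobj : ∀ u, Dobj u = fconj (fun x => ((f x : ℝ) : EReal) + g x) (-u) + fconj h u)
    -- a fixed point y of G_γ, and z = prox^{D⁻¹}_{γh}(y)
    (y : EuclideanSpace ℝ (Fin p)) (hy : G y = y)
    (z : EuclideanSpace ℝ (Fin p)) (hzdef : z = proxh y) :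
    (∀ x', P z ≤ P x') ∧
      proxh y = proxg (2 • z - y - γ • Dop (gradf z)) ∧
      (∀ u', Dobj (γ⁻¹ • Dinvop (y - z)) ≤ Dobj u') :=
  fixed_point_gives_minimizers_general f hfconv gradf hfdiff g h hg hh d hd Dop Dinvop hDop hDinvop
    γ hγ proxg proxh hproxg hproxh G hG P hP Dobj hDobj y hy z hzdef
end
end

section
/- Let ζ_i be a random vector in ℝ^p indexed by a random index i, and let Q_i be a (random, index-dependent) orthogonal projection matrix such that Q_i ζ_i = ζ_i almost surely and E[Q_i] is invertible, and set A = (E[Q_i])⁻¹. Then E‖ζ_i − Q_i A E[ζ_i]‖² = E‖ζ_i‖² − ‖E[ζ_i]‖²_A, where ‖v‖²_A = ⟨v, Av⟩. -/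
open Finset
open scoped RealInnerProductSpace

noncomputable section

/-- generalized variance decomposition.  Let `ζ` be a random vector indexed by a
random index `i` (a finite index type `ι` with probability weights `w`), and `Q i` orthogonal
projections (symmetric and idempotent) with `Q i (ζ i) = ζ i`; let `A` be the inverse of
`E[Q] = ∑ i, w i • Q i`.  Then `E‖ζ − Q A E[ζ]‖² = E‖ζ‖² − ‖E[ζ]‖²_A`. -/
theorem generalized_variance_decomposition
    {p : ℕ} {ι : Type} [Fintype ι]
    (w : ι → ℝ) (hw : ∀ i, 0 ≤ w i) (hw1 : ∑ i, w i = 1)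
    (ζ : ι → EuclideanSpace ℝ (Fin p))
    (Q : ι → (EuclideanSpace ℝ (Fin p) →ₗ[ℝ] EuclideanSpace ℝ (Fin p)))
    (hsymm : ∀ i x y, ⟪Q i x, y⟫ = ⟪x, Q i y⟫)
    (hidem : ∀ i x, Q i (Q i x) = Q i x)
    (hfix : ∀ i, Q i (ζ i) = ζ i)
    (A : EuclideanSpace ℝ (Fin p) →ₗ[ℝ] EuclideanSpace ℝ (Fin p))
    (hA₁ : ∀ x, A ((∑ i, w i • Q i) x) = x)
    (hA₂ : ∀ x, (∑ i, w i • Q i) (A x) = x) :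
    ∑ i, w i * ‖ζ i - Q i (A (∑ j, w j • ζ j))‖ ^ 2
      = (∑ i, w i * ‖ζ i‖ ^ 2) - ⟪∑ j, w j • ζ j, A (∑ j, w j • ζ j)⟫ := by
  set m : EuclideanSpace ℝ (Fin p) := ∑ j, w j • ζ j with hm
  set v : EuclideanSpace ℝ (Fin p) := A m with hv
  have key : ∀ i, ‖ζ i - Q i v‖ ^ 2
      = ‖ζ i‖ ^ 2 - 2 * ⟪ζ i, v⟫ + ⟪v, Q i v⟫ := by
    intro i
    have h1 : ⟪ζ i, Q i v⟫ = ⟪ζ i, v⟫ := by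
      rw [← hsymm i (ζ i) v, hfix]
    have h2 : ‖Q i v‖ ^ 2 = ⟪v, Q i v⟫ := by
      rw [← real_inner_self_eq_norm_sq, hsymm i v (Q i v), hidem]
    rw [norm_sub_sq_real, h1, h2]
  have hsum1 : ∑ i, w i * ⟪ζ i, v⟫ = ⟪m, v⟫ := by
    rw [hm, sum_inner]
    exact Finset.sum_congr rfl fun i _ => by rw [real_inner_smul_left]
  have hsum2 : ∑ i, w i * ⟪v, Q i v⟫ = ⟪m, v⟫ := by
    have : ∑ i, w i * ⟪v, Q i v⟫ = ⟪v, (∑ i, w i • Q i) v⟫ := by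
      rw [LinearMap.sum_apply, inner_sum]
      exact Finset.sum_congr rfl fun i _ => by
        rw [LinearMap.smul_apply, real_inner_smul_right]
    rw [this, hv, hA₂, real_inner_comm]
  calc ∑ i, w i * ‖ζ i - Q i v‖ ^ 2
      = ∑ i, (w i * ‖ζ i‖ ^ 2 - 2 * (w i * ⟪ζ i, v⟫) + w i * ⟪v, Q i v⟫) := by
        refine Finset.sum_congr rfl fun i _ => ?_
        rw [key i]; ring
    _ = (∑ i, w i * ‖ζ i‖ ^ 2) - 2 * (∑ i, w i * ⟪ζ i, v⟫)
          + ∑ i, w i * ⟪v, Q i v⟫ := by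
        rw [Finset.sum_add_distrib, Finset.sum_sub_distrib, Finset.mul_sum]
    _ = (∑ i, w i * ‖ζ i‖ ^ 2) - ⟪m, v⟫ := by rw [hsum1, hsum2]; ring
end
end
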